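/- Let V : ℝ → ℝ be bounded and continuous, E real, a > 0, and let u, v be solutions of −w″ + Vw = Ew on [0,a] whose Wronskian u′(x)v(x) − u(x)v′(x) is a positive constant c > 0. Assume u(0) = 0 (so v(0) ≠ 0; assume v(0) > 0). Then (v(x), u(x)) ≠ (0,0) for all x ∈ [0,a], and if θ : [0,a] → ℝ is continuous with θ(0) = 0 and (v(x), u(x)) = r(x)(cos θ(x), sin θ(x)) with r(x) > 0, then whenever u has exactly m zeros in (0,a), one has θ(a) ∈ (mπ, (m+1)π]. -/

import Mathlib

open Set Real Filter Topology

/-!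
At a zero `x₀` of `u` the Wronskian gives `u'(x₀) v(x₀) = c > 0`, while
`r(y) r(x₀) sin (θ(y) - θ(x₀)) = u(y) v(x₀) - v(y) u(x₀) = u(y) v(x₀)`. Hence near `x₀` the
difference `θ(y) - θ(x₀)` has the sign of `y - x₀`: the angle crosses every level `kπ` strictly
upward. So once `θ` has passed a level `kπ` it never returns to it; `θ` is strictly increasing on
the zeros of `u`, and by the intermediate value theorem these zeros in `(0, a)` correspond exactly
to the integers `k ≥ 1` with `kπ < θ(a)`.
-/

theorem HasDerivAt.eventually_mul_sub_pos {g : ℝ → ℝ} {d x : ℝ} (hg : HasDerivAt g d x)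
    (hgx : g x = 0) (hd : 0 < d) : ∀ᶠ y in 𝓝[≠] x, 0 < g y * (y - x) := by
  filter_upwards [(hasDerivAt_iff_tendsto_slope.mp hg).eventually_const_lt hd,
    self_mem_nhdsWithin] with y hslope hy
  have hyx : y - x ≠ 0 := sub_ne_zero.mpr hy
  have hg_eq : g y * (y - x) = slope g x y * (y - x) ^ 2 := by
    rw [slope_def_field, hgx, sub_zero]
    field_simp
  rw [hg_eq]
  positivity

theorem pos_mul_of_sin_mul_pos {t s : ℝ} (ht : |t| < π) (h : 0 < sin t * s) : 0 < t * s := by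
  obtain ⟨htl, htr⟩ := abs_lt.mp ht
  rcases lt_trichotomy t 0 with hneg | rfl | hpos
  · exact mul_pos_of_neg_of_neg hneg
      (neg_of_mul_pos_right h (sin_neg_of_neg_of_neg_pi_lt hneg htl).le)
  · simp at h
  · exact mul_pos hpos (pos_of_mul_pos_right h (sin_pos_of_pos_of_lt_pi hpos htr).le)

def CrossesUpAt (f : ℝ → ℝ) (s : Set ℝ) (x : ℝ) : Prop :=
  ∀ᶠ y in 𝓝[≠] x, y ∈ s → 0 < (f y - f x) * (y - x)

theorem CrossesUpAt.mono {f : ℝ → ℝ} {s t : Set ℝ} {x : ℝ} (h : CrossesUpAt f s x)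
    (hts : t ⊆ s) : CrossesUpAt f t x :=
  Eventually.mono h fun _ hy hyt => hy (hts hyt)

theorem crossesUpAt_of_zero {s : Set ℝ} {u v r θ : ℝ → ℝ} {x₀ d : ℝ}
    (hθ : ContinuousWithinAt θ s x₀) (hr : ∀ x ∈ s, 0 < r x)
    (hv : ∀ x ∈ s, v x = r x * cos (θ x)) (hu : ∀ x ∈ s, u x = r x * sin (θ x))
    (hx₀ : x₀ ∈ s) (hux₀ : u x₀ = 0) (hd : HasDerivAt u d x₀) (hdv : 0 < d * v x₀) :
    CrossesUpAt θ s x₀ := by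
  have hsign : ∀ᶠ y in 𝓝[≠] x₀, 0 < u y * v x₀ * (y - x₀) :=
    (hd.mul_const (v x₀)).eventually_mul_sub_pos (by rw [hux₀, zero_mul]) hdv
  have hnear : ∀ᶠ y in 𝓝 x₀, y ∈ s → |θ y - θ x₀| < π :=
    eventually_nhdsWithin_iff.mp (hθ.eventually (Metric.ball_mem_nhds _ pi_pos))
  filter_upwards [hsign, nhdsWithin_le_nhds hnear] with y hy hyπ hys
  have hsin0 : r x₀ * sin (θ x₀) = 0 := hu x₀ hx₀ ▸ hux₀
  have hcross : u y * v x₀ = sin (θ y - θ x₀) * (r y * r x₀) := by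
    rw [sin_sub, hu y hys, hv x₀ hx₀]
    linear_combination (cos (θ y) * r y) * hsin0
  rw [hcross, mul_right_comm] at hy
  exact pos_mul_of_sin_mul_pos (hyπ hys)
    (pos_of_mul_pos_left hy (mul_pos (hr y hys) (hr x₀ hx₀)).le)

theorem ContinuousOn.lt_of_crossesUpAt {f : ℝ → ℝ} {p b : ℝ} (hf : ContinuousOn f (Icc p b))
    (hcross : ∀ x ∈ Icc p b, f x = f p → CrossesUpAt f (Icc p b) x) :
    ∀ x ∈ Ioc p b, f p < f x := by
  have hright : ∀ x ∈ Ico p b, f x = f p → ∀ᶠ y in 𝓝[>] x, f p < f y := by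
    intro x hx hfx
    filter_upwards [(hcross x (Ico_subset_Icc_self hx) hfx).filter_mono (nhdsGT_le_nhdsNE x),
      self_mem_nhdsWithin, Icc_mem_nhdsGT_of_mem hx] with y hy hxy hyI
    rw [← hfx, ← sub_pos]
    exact pos_of_mul_pos_left (hy hyI) (sub_pos.mpr hxy).le
  have hge : Icc p b ⊆ {x | f p ≤ f x} := by
    refine IsClosed.Icc_subset_of_forall_mem_nhdsWithin ?_ (le_refl (f p)) ?_
    · rw [inter_comm]
      exact hf.preimage_isClosed_of_isClosed isClosed_Icc isClosed_Ici
    · rintro x ⟨hpx, hx⟩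
      rcases (show f p ≤ f x from hpx).lt_or_eq with hlt | heq
      · filter_upwards [nhdsWithin_le_of_mem (Icc_mem_nhdsGT_of_mem hx)
          ((hf x (Ico_subset_Icc_self hx)).eventually (lt_mem_nhds hlt))] with y hy
        exact hy.le
      · exact (hright x hx heq.symm).mono fun y hy => hy.le
  intro x hx
  refine (hge (Ioc_subset_Icc_self hx)).lt_of_ne fun heq => ?_
  have hleft : ∀ᶠ y in 𝓝[<] x, y ∈ Icc p b ∧ f y < f p := by
    filter_upwards [(hcross x (Ioc_subset_Icc_self hx) heq.symm).filter_mono (nhdsLT_le_nhdsNE x),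
      self_mem_nhdsWithin, Icc_mem_nhdsLT_of_mem hx] with y hy hyx hyI
    refine ⟨hyI, ?_⟩
    rw [heq, ← sub_neg]
    exact neg_of_mul_pos_left (hy hyI) (sub_neg.mpr hyx).le
  obtain ⟨y, hyI, hy⟩ := hleft.exists
  exact (hge hyI).not_gt hy

theorem ncard_zeros_sin_eq {f : ℝ → ℝ} {a : ℝ} (ha : 0 ≤ a) (hf : ContinuousOn f (Icc 0 a))
    (hf0 : f 0 = 0) (hafter : ∀ x ∈ Icc 0 a, sin (f x) = 0 → ∀ y ∈ Ioc x a, f x < f y) :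
    {x ∈ Ioo 0 a | sin (f x) = 0}.ncard = {n : ℕ | 0 < n ∧ n * π < f a}.ncard := by
  have hmono : StrictMonoOn f {x ∈ Ioo 0 a | sin (f x) = 0} := fun x hx y hy hxy =>
    hafter x (Ioo_subset_Icc_self hx.1) hx.2 y ⟨hxy, hy.1.2.le⟩
  have himage : f '' {x ∈ Ioo 0 a | sin (f x) = 0} =
      (fun n : ℕ => n * π) '' {n : ℕ | 0 < n ∧ n * π < f a} := by
    ext t
    constructor
    · rintro ⟨x, ⟨hx, hsx⟩, rfl⟩
      obtain ⟨k, hk⟩ := sin_eq_zero_iff.mp hsx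
      have hpos : 0 < f x := hf0 ▸ hafter 0 (left_mem_Icc.2 ha) (by rw [hf0, sin_zero]) x
        ⟨hx.1, hx.2.le⟩
      have hk_pos : 0 < k := by
        have : (0 : ℝ) < k := pos_of_mul_pos_left (hk ▸ hpos) pi_pos.le
        exact_mod_cast this
      have hlt := hafter x (Ioo_subset_Icc_self hx) hsx a ⟨hx.2, le_rfl⟩
      rw [← hk] at hlt
      lift k to ℕ using hk_pos.le
      exact ⟨k, ⟨by exact_mod_cast hk_pos, by exact_mod_cast hlt⟩, by exact_mod_cast hk⟩
    · rintro ⟨n, ⟨hn, hna⟩, rfl⟩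
      obtain ⟨x, hx, hfx⟩ := intermediate_value_Ioo ha hf
        ⟨by rw [hf0]; exact mul_pos (by exact_mod_cast hn) pi_pos, hna⟩
      exact ⟨x, ⟨hx, by rw [hfx, sin_nat_mul_pi]⟩, hfx⟩
  have hinj : Function.Injective fun n : ℕ => (n : ℝ) * π := fun m n h => by
    simpa [pi_ne_zero] using h
  rw [← hmono.injOn.ncard_image, himage, hinj.injOn.ncard_image]

theorem mem_Ioc_of_ncard_nat_mul_lt {p y : ℝ} (hp : 0 < p) (hy : 0 < y) {m : ℕ}
    (hm : {n : ℕ | 0 < n ∧ n * p < y}.ncard = m) : y ∈ Ioc (m * p) ((m + 1) * p) := by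
  have hset : {n : ℕ | 0 < n ∧ n * p < y} = Ioo 0 ⌈y / p⌉₊ := by
    ext n
    simp [Nat.lt_ceil, lt_div_iff₀ hp]
  rw [hset, Set.ncard_Ioo_nat] at hm
  have hceil : ⌈y / p⌉₊ = m + 1 := by
    have := Nat.ceil_pos.mpr (div_pos hy hp)
    omega
  obtain ⟨hlo, hhi⟩ := (Nat.ceil_eq_iff (Nat.succ_ne_zero m)).mp hceil
  push_cast at hlo hhi
  exact ⟨by simpa [lt_div_iff₀ hp] using hlo, (div_le_iff₀ hp).mp hhi⟩

theorem rotation_number_uv (a : ℝ) (ha : 0 < a) (u v : ℝ → ℝ)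
    (c : ℝ) (hc : 0 < c)
    (hW : ∀ x ∈ Icc 0 a, deriv u x * v x - u x * deriv v x = c) :
    (∀ x ∈ Icc 0 a, ¬ (v x = 0 ∧ u x = 0)) ∧
    ∀ θ : ℝ → ℝ, ContinuousOn θ (Icc 0 a) → θ 0 = 0 →
      (∀ x ∈ Icc 0 a, 0 < Real.sqrt ((v x) ^ 2 + (u x) ^ 2)) →
      (∀ x ∈ Icc 0 a, v x = Real.sqrt ((v x) ^ 2 + (u x) ^ 2) * Real.cos (θ x)) →
      (∀ x ∈ Icc 0 a, u x = Real.sqrt ((v x) ^ 2 + (u x) ^ 2) * Real.sin (θ x)) →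
      ∀ m : ℕ, {x ∈ Ioo 0 a | u x = 0}.Finite → {x ∈ Ioo 0 a | u x = 0}.ncard = m →
        θ a ∈ Ioc (m * π) ((m + 1) * π) := by
  refine ⟨fun x hx ⟨hvx, hux⟩ => by simpa [hvx, hux, hc.ne] using hW x hx, ?_⟩
  intro θ hθ hθ0 hr hcos hsin m _ hm
  have hcross : ∀ x ∈ Icc 0 a, u x = 0 → CrossesUpAt θ (Icc 0 a) x := by
    intro x hx hux
    have hWx : deriv u x * v x = c := by simpa [hux] using hW x hx
    -- the Wronskian forces `u' ≠ 0` at zeros of `u`, hence differentiability there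
    have hdu := differentiableAt_of_deriv_ne_zero (left_ne_zero_of_mul (hWx ▸ hc.ne'))
    exact crossesUpAt_of_zero (hθ x hx) hr hcos hsin hx hux hdu.hasDerivAt (hWx ▸ hc)
  have hu_iff : ∀ x ∈ Icc 0 a, u x = 0 ↔ sin (θ x) = 0 := fun x hx => by
    rw [hsin x hx, mul_eq_zero, or_iff_right (hr x hx).ne']
  have hafter : ∀ x ∈ Icc 0 a, sin (θ x) = 0 → ∀ y ∈ Ioc x a, θ x < θ y := by
    intro x hx hsx
    refine (hθ.mono (Icc_subset_Icc_left hx.1)).lt_of_crossesUpAt fun y hy hθy => ?_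
    have hy' : y ∈ Icc 0 a := ⟨hx.1.trans hy.1, hy.2⟩
    exact (hcross y hy' ((hu_iff y hy').2 (hθy ▸ hsx))).mono (Icc_subset_Icc_left hx.1)
  have hzeros : {x ∈ Ioo 0 a | u x = 0} = {x ∈ Ioo 0 a | sin (θ x) = 0} :=
    sep_ext_iff.mpr fun x hx => hu_iff x (Ioo_subset_Icc_self hx)
  rw [hzeros, ncard_zeros_sin_eq ha.le hθ hθ0 hafter] at hm
  have hθa : 0 < θ a :=
    hθ0 ▸ hafter 0 (left_mem_Icc.2 ha.le) (by rw [hθ0, sin_zero]) a ⟨ha, le_rfl⟩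
  exact mem_Ioc_of_ncard_nat_mul_lt pi_pos hθa hm
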